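/- arXiv:q-alg/9605038 — 2 statements merged into one kernel-verified Lean document; each statement's English description precedes it below -/
import Mathlib

section
/- The algebraic bracket M'_1(φ,ψ) = Σ_{A,B} q^{AB} (j(e_A)φ) ∧ (i(e_B)ψ) on the exterior algebra of a finite-dimensional inner product space satisfies the superderivation rule in its second argument: M'_1(φ, ψ ∧ χ) = M'_1(φ,ψ) ∧ χ + (-1)^{d1 d2} ψ ∧ M'_1(φ,χ) for homogeneous φ, ψ, χ of degrees d1, d2, d3. -/
set_option synthInstance.maxHeartbeats 1000000
set_option maxHeartbeats 1000000
open CliffordAlgebra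

/-- Interior product (left antiderivation) `i(v)` on the exterior algebra `Λ V*` of the dual
of `V`, given by contraction with the evaluation functional of `v ∈ V`. -/
noncomputable def intProd (R V : Type*) [CommRing R] [AddCommGroup V] [Module R V] (v : V) :
    ExteriorAlgebra R (Module.Dual R V) →ₗ[R] ExteriorAlgebra R (Module.Dual R V) :=
  contractLeft (Q := (0 : QuadraticForm R (Module.Dual R V))) (Module.Dual.eval R V v)

/-- The right antiderivation `j(v) = P ∘ i(v)`, where `P` is the parity (grade involution)
automorphism of `Λ V*`. -/
noncomputable def intProdR (R V : Type*) [CommRing R] [AddCommGroup V] [Module R V] (v : V) :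
    ExteriorAlgebra R (Module.Dual R V) →ₗ[R] ExteriorAlgebra R (Module.Dual R V) :=
  (involute (Q := (0 : QuadraticForm R (Module.Dual R V)))).toLinearMap ∘ₗ intProd R V v

/-- The algebraic bracket `M'₁(φ,ψ) = Σ_{A,B} q^{AB} (j(e_A)φ) ∧ (i(e_B)ψ)` on `Λ V*`,
where `q^{AB}` are the entries of the inverse of the Gram matrix of `q` in the basis `e`. -/
noncomputable def M1alg {V : Type*} [AddCommGroup V] [Module ℝ V] {ι : Type*} [Fintype ι]
    [DecidableEq ι] (e : Module.Basis ι ℝ V) (q : LinearMap.BilinForm ℝ V)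
    (φ ψ : ExteriorAlgebra ℝ (Module.Dual ℝ V)) : ExteriorAlgebra ℝ (Module.Dual ℝ V) :=
  ∑ A : ι, ∑ B : ι,
    ((BilinForm.toMatrix e q)⁻¹ A B) • (intProdR ℝ V (e A) φ * intProd ℝ V (e B) ψ)

/-!
Contraction `i(v)` is an antiderivation, `i(v)(ψ ∧ χ) = i(v)ψ ∧ χ + Pψ ∧ i(v)χ`, so each summand
of `M'₁(φ, ψ ∧ χ)` splits into two. The first is a summand of `M'₁(φ, ψ) ∧ χ`; in the second,
`j(e_A)φ` has degree `d₁ - 1` and `Pψ = (-1)^{d₂} ψ`, so graded commutativity moves `ψ` to the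
front at the total sign `(-1)^{d₂ + (d₁ - 1) d₂} = (-1)^{d₁ d₂}`.
-/

namespace CliffordAlgebra

variable {R M : Type*} [CommRing R] [AddCommGroup M] [Module R M]

theorem contractLeft_mul {Q : QuadraticForm R M} (d : Module.Dual R M) (x y : CliffordAlgebra Q) :
    contractLeft d (x * y) = contractLeft d x * y + involute x * contractLeft d y := by
  induction x using CliffordAlgebra.induction generalizing y with
  | algebraMap r =>
    rw [contractLeft_algebraMap_mul, contractLeft_algebraMap, zero_mul, zero_add,
      involute.commutes]
  | ι v =>
    rw [contractLeft_ι_mul, contractLeft_ι, involute_ι, Algebra.smul_def, neg_mul,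
      sub_eq_add_neg]
  | mul a b ha hb =>
    rw [mul_assoc, ha, hb, ha b, map_mul]
    noncomm_ring
  | add a b ha hb =>
    simp only [add_mul, map_add, ha, hb]
    abel

end CliffordAlgebra

namespace ExteriorAlgebra

variable {R M : Type*} [CommRing R] [AddCommGroup M] [Module R M]

theorem involute_of_mem_exteriorPower {n : ℕ} {x : ExteriorAlgebra R M} (hx : x ∈ ⋀[R]^n M) :
    involute (Q := (0 : QuadraticForm R M)) x = (-1 : R) ^ n • x := by
  induction hx using Submodule.pow_induction_on_left' with
  | algebraMap r => simp
  | add x y i hx hy ihx ihy => rw [map_add, ihx, ihy, smul_add]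
  | mem_mul m hm i x hx ih =>
    obtain ⟨v, rfl⟩ := hm
    rw [map_mul, involute_ι, ih, pow_succ, mul_comm, mul_smul, neg_one_smul, neg_mul,
      mul_smul_comm]

theorem ι_mul_of_mem_exteriorPower {n : ℕ} (v : M) {y : ExteriorAlgebra R M}
    (hy : y ∈ ⋀[R]^n M) : ι R v * y = (-1 : R) ^ n • (y * ι R v) := by
  induction hy using Submodule.pow_induction_on_left' with
  | algebraMap r => simp [Algebra.commutes]
  | add x y i hx hy ihx ihy => rw [mul_add, add_mul, ihx, ihy, smul_add]
  | mem_mul m hm i x hx ih =>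
    obtain ⟨w, rfl⟩ := hm
    have anticomm : ι R v * ι R w = -(ι R w * ι R v) :=
      eq_neg_of_add_eq_zero_left (ι_add_mul_swap v w)
    rw [← mul_assoc, anticomm, neg_mul, mul_assoc, ih, mul_smul_comm, pow_succ, mul_comm,
      mul_smul, neg_one_smul, mul_assoc]

theorem mul_comm_of_mem_exteriorPower {m n : ℕ} {x y : ExteriorAlgebra R M}
    (hx : x ∈ ⋀[R]^m M) (hy : y ∈ ⋀[R]^n M) : x * y = (-1 : R) ^ (m * n) • (y * x) := by
  induction hx using Submodule.pow_induction_on_left' with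
  | algebraMap r => simp [Algebra.commutes]
  | add a b i ha hb iha ihb => rw [add_mul, mul_add, iha, ihb, smul_add]
  | mem_mul m' hm' i a ha ih =>
    obtain ⟨v, rfl⟩ := hm'
    rw [mul_assoc, ih, mul_smul_comm, ← mul_assoc, ι_mul_of_mem_exteriorPower v hy,
      smul_mul_assoc, smul_smul, mul_assoc, ← pow_add, Nat.succ_mul, add_comm]

theorem contractLeft_of_mem_exteriorPower_zero (d : Module.Dual R M) {x : ExteriorAlgebra R M}
    (hx : x ∈ ⋀[R]^0 M) : contractLeft (Q := (0 : QuadraticForm R M)) d x = 0 := by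
  rw [exteriorPower, pow_zero, Submodule.mem_one] at hx
  obtain ⟨r, rfl⟩ := hx
  exact contractLeft_algebraMap _ d r

theorem contractLeft_mem_exteriorPower (d : Module.Dual R M) {n : ℕ} {x : ExteriorAlgebra R M}
    (hx : x ∈ ⋀[R]^(n + 1) M) : contractLeft (Q := (0 : QuadraticForm R M)) d x ∈ ⋀[R]^n M := by
  induction n generalizing x with
  | zero =>
    rw [exteriorPower, pow_one] at hx
    obtain ⟨v, rfl⟩ := hx
    rw [contractLeft_ι, exteriorPower, pow_zero]
    exact Submodule.algebraMap_mem _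
  | succ n ih =>
    rw [exteriorPower, pow_succ'] at hx
    induction hx using Submodule.mul_induction_on' with
    | mem_mul_mem m hm a ha =>
      obtain ⟨v, rfl⟩ := hm
      rw [contractLeft_ι_mul]
      refine sub_mem (Submodule.smul_mem _ _ ha) ?_
      rw [exteriorPower, pow_succ']
      exact Submodule.mul_mem_mul (LinearMap.mem_range_self _ v) (ih ha)
    | add x _ y _ hx hy => rw [map_add]; exact add_mem hx hy

end ExteriorAlgebra

section InteriorProduct

variable {R V : Type*} [CommRing R] [AddCommGroup V] [Module R V]

theorem intProd_mul (v : V) (x y : ExteriorAlgebra R (Module.Dual R V)) :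
    intProd R V v (x * y) = intProd R V v x * y + involute x * intProd R V v y :=
  contractLeft_mul _ x y

theorem intProdR_mul_involute (v : V) {m n : ℕ} {φ ψ : ExteriorAlgebra R (Module.Dual R V)}
    (hφ : φ ∈ ⋀[R]^m (Module.Dual R V)) (hψ : ψ ∈ ⋀[R]^n (Module.Dual R V)) :
    intProdR R V v φ * involute ψ = (-1 : R) ^ (m * n) • (ψ * intProdR R V v φ) := by
  cases m with
  | zero =>
    rw [intProdR, LinearMap.comp_apply, intProd,
      ExteriorAlgebra.contractLeft_of_mem_exteriorPower_zero _ hφ]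
    simp
  | succ k =>
    have hi := ExteriorAlgebra.contractLeft_mem_exteriorPower (Module.Dual.eval R V v) hφ
    have hj : intProdR R V v φ ∈ ⋀[R]^k (Module.Dual R V) := by
      rw [intProdR, LinearMap.comp_apply, AlgHom.toLinearMap_apply, intProd,
        ExteriorAlgebra.involute_of_mem_exteriorPower hi]
      exact Submodule.smul_mem _ _ hi
    rw [ExteriorAlgebra.involute_of_mem_exteriorPower hψ, mul_smul_comm,
      ExteriorAlgebra.mul_comm_of_mem_exteriorPower hj hψ, smul_smul, ← pow_add]
    congr 2
    ring

end InteriorProduct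

theorem M1alg_superderivation_general {V : Type*} [AddCommGroup V] [Module ℝ V]
    {ι : Type*} [Fintype ι] [DecidableEq ι]
    (e : Module.Basis ι ℝ V) (q : LinearMap.BilinForm ℝ V)
    (d1 d2 : ℕ) (φ ψ χ : ExteriorAlgebra ℝ (Module.Dual ℝ V))
    (hφ : φ ∈ ⋀[ℝ]^d1 (Module.Dual ℝ V)) (hψ : ψ ∈ ⋀[ℝ]^d2 (Module.Dual ℝ V)) :
    M1alg e q φ (ψ * χ) =
      M1alg e q φ ψ * χ + ((-1 : ℝ) ^ (d1 * d2)) • (ψ * M1alg e q φ χ) := by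
  have summand : ∀ A B : ι, intProdR ℝ V (e A) φ * intProd ℝ V (e B) (ψ * χ) =
      intProdR ℝ V (e A) φ * intProd ℝ V (e B) ψ * χ +
        (-1 : ℝ) ^ (d1 * d2) • (ψ * (intProdR ℝ V (e A) φ * intProd ℝ V (e B) χ)) := by
    intro A B
    rw [intProd_mul, mul_add, ← mul_assoc, ← mul_assoc, ← mul_assoc,
      intProdR_mul_involute _ hφ hψ, smul_mul_assoc]
  simp only [M1alg, summand, smul_add, Finset.sum_add_distrib, Finset.sum_mul, Finset.mul_sum,
    Finset.smul_sum, smul_mul_assoc, mul_smul_comm, smul_comm ((-1 : ℝ) ^ (d1 * d2))]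

/-- The algebraic bracket `M'₁` satisfies the superderivation rule in its
second argument: `M'₁(φ, ψ ∧ χ) = M'₁(φ,ψ) ∧ χ + (-1)^(d₁d₂) ψ ∧ M'₁(φ,χ)` for homogeneous
`φ, ψ, χ` of degrees `d₁, d₂, d₃`. -/
theorem M1alg_superderivation {V : Type*} [AddCommGroup V] [Module ℝ V]
    [FiniteDimensional ℝ V] {ι : Type*} [Fintype ι] [DecidableEq ι]
    (e : Module.Basis ι ℝ V) (q : LinearMap.BilinForm ℝ V) (hq_symm : q.IsSymm)
    (hq_nondeg : q.Nondegenerate)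
    (d1 d2 d3 : ℕ) (φ ψ χ : ExteriorAlgebra ℝ (Module.Dual ℝ V))
    (hφ : φ ∈ ⋀[ℝ]^d1 (Module.Dual ℝ V)) (hψ : ψ ∈ ⋀[ℝ]^d2 (Module.Dual ℝ V))
    (hχ : χ ∈ ⋀[ℝ]^d3 (Module.Dual ℝ V)) :
    M1alg e q φ (ψ * χ) =
      M1alg e q φ ψ * χ + ((-1 : ℝ) ^ (d1 * d2)) • (ψ * M1alg e q φ χ) :=
  M1alg_superderivation_general e q d1 d2 φ ψ χ hφ hψ
end

section
/- In the fibrewise deformed algebra (W_m, ∘) defined via F∘G = μ(exp((iħ/2)(R+S))(F⊗G)), where R = Σ Λ^{ij} i_s(∂_i) ⊗ i_s(∂_j) and S = Σ q^{AB} j(e_A) ⊗ i(e_B), the product ∘ is associative, given that the six operators R_{12}, R_{13}, R_{23}, S_{12}, S_{13}(P_E)_2, S_{23} on the triple tensor product pairwise commute and the pull-through formulas R∘(μ⊗1) = (μ⊗1)(R_{13}+R_{23}), R∘(1⊗μ) = (1⊗μ)(R_{12}+R_{13}), S∘(μ⊗1) = (μ⊗1)(S_{13}(P_E)_2 + S_{23}),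 S∘(1⊗μ) = (1⊗μ)(S_{12} + S_{13}(P_E)_2) hold. -/
open TensorProduct

/-- Binomial identity with factorial coefficients for commuting elements. -/
lemma fedosov_aux_binom {M : Type*} [AddCommGroup M] [Module ℂ M]
    {X Y : Module.End ℂ M} (h : Commute X Y) (n : ℕ) :
    ∑ p ∈ Finset.range (n + 1),
        ((p.factorial * (n - p).factorial : ℂ))⁻¹ • (Y ^ (n - p) * X ^ p) =
      ((n.factorial : ℂ))⁻¹ • (X + Y) ^ n := by
  rw [h.add_pow, Finset.smul_sum]
  refine Finset.sum_congr rfl fun p hp => ?_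
  have hpn : p ≤ n := Finset.mem_range_succ_iff.mp hp
  have hfac : (n.choose p : ℂ) * p.factorial * (n - p).factorial = n.factorial := by
    exact_mod_cast congrArg (Nat.cast : ℕ → ℂ) (Nat.choose_mul_factorial_mul_factorial hpn)
  have h1 : X ^ p * Y ^ (n - p) = Y ^ (n - p) * X ^ p := (h.pow_pow p (n - p)).eq
  have h2 : (Y ^ (n - p) * X ^ p) * (n.choose p : Module.End ℂ M) =
      (n.choose p : ℂ) • (Y ^ (n - p) * X ^ p) := by
    rw [← nsmul_eq_mul', ← Nat.cast_smul_eq_nsmul ℂ]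
  rw [h1, h2, smul_smul]
  congr 1
  have hp0 : (p.factorial : ℂ) ≠ 0 := Nat.cast_ne_zero.mpr p.factorial_ne_zero
  have hq0 : ((n - p).factorial : ℂ) ≠ 0 := Nat.cast_ne_zero.mpr (n - p).factorial_ne_zero
  have hc0 : (n.choose p : ℂ) ≠ 0 := Nat.cast_ne_zero.mpr (Nat.choose_pos hpn).ne'
  rw [← hfac]
  field_simp

/-- Abstract Fedosov fibrewise associativity.  Let `A` be a module over
`ℂ` with associative multiplication `μ : A ⊗ A → A`, and let
`R = Σᵢ r₁ᵢ ⊗ r₂ᵢ`, `S = Σᵢ s₁ᵢ ⊗ s₂ᵢ` be operators on `A ⊗ A` given by finite families of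
endomorphisms, with `P` (the parity `P_E`) an algebra automorphism of `(A, μ)`.  Assume the
pull-through formulas
`R(μ⊗1) = (μ⊗1)(R₁₃+R₂₃)`, `R(1⊗μ) = (1⊗μ)(R₁₂+R₁₃)`,
`S(μ⊗1) = (μ⊗1)(S₁₃(P_E)₂+S₂₃)`, `S(1⊗μ) = (1⊗μ)(S₁₂+S₁₃(P_E)₂)`
hold and that the six operators `R₁₂, R₁₃, R₂₃, S₁₂, S₁₃(P_E)₂, S₂₃` pairwise commute.
Then the deformed product `a∘b := μ(e^((iħ/2)(R+S))(a⊗b))` is associative; equivalently,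
for every order `n` in `ħ` the coefficient identity
`Σ_{p+q=n} (1/p!q!) μ(T^q(μ(T^p(a⊗b))⊗c)) = Σ_{p+q=n} (1/p!q!) μ(T^q(a⊗μ(T^p(b⊗c))))`
holds, where `T = R + S`. -/
theorem fedosov_fibrewise_associative {A : Type*} [AddCommGroup A] [Module ℂ A]
    {ι : Type*} [Fintype ι]
    (μ : A ⊗[ℂ] A →ₗ[ℂ] A)
    (r₁ r₂ s₁ s₂ : ι → Module.End ℂ A) (P : Module.End ℂ A)
    -- the operators R and S on A ⊗ A and their leg-wise versions on (A ⊗ A) ⊗ A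
    (R S : Module.End ℂ (A ⊗[ℂ] A))
    (hR : R = ∑ i, TensorProduct.map (r₁ i) (r₂ i))
    (hS : S = ∑ i, TensorProduct.map (s₁ i) (s₂ i))
    (R12 R13 R23 S12 S13P2 S23 : Module.End ℂ ((A ⊗[ℂ] A) ⊗[ℂ] A))
    (hR12 : R12 = ∑ i, TensorProduct.map (TensorProduct.map (r₁ i) (r₂ i)) LinearMap.id)
    (hR13 : R13 = ∑ i, TensorProduct.map (TensorProduct.map (r₁ i) LinearMap.id) (r₂ i))
    (hR23 : R23 = ∑ i, TensorProduct.map (TensorProduct.map LinearMap.id (r₁ i)) (r₂ i))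
    (hS12 : S12 = ∑ i, TensorProduct.map (TensorProduct.map (s₁ i) (s₂ i)) LinearMap.id)
    (hS13P2 : S13P2 = ∑ i, TensorProduct.map (TensorProduct.map (s₁ i) P) (s₂ i))
    (hS23 : S23 = ∑ i, TensorProduct.map (TensorProduct.map LinearMap.id (s₁ i)) (s₂ i))
    -- `1 ⊗ μ` transported to `(A ⊗ A) ⊗ A`
    (ν : (A ⊗[ℂ] A) ⊗[ℂ] A →ₗ[ℂ] A ⊗[ℂ] A)
    (hν : ν = TensorProduct.map LinearMap.id μ ∘ₗ (TensorProduct.assoc ℂ A A A).toLinearMap)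
    -- μ is associative and P is an algebra automorphism
    (hμ : μ ∘ₗ TensorProduct.map μ LinearMap.id = μ ∘ₗ ν)
    (hPmul : P ∘ₗ μ = μ ∘ₗ TensorProduct.map P P)
    (hPbij : Function.Bijective P)
    -- the pull-through formulas
    (hR1 : R ∘ₗ TensorProduct.map μ LinearMap.id = TensorProduct.map μ LinearMap.id ∘ₗ (R13 + R23))
    (hR2 : R ∘ₗ ν = ν ∘ₗ (R12 + R13))
    (hS1 : S ∘ₗ TensorProduct.map μ LinearMap.id = TensorProduct.map μ LinearMap.id ∘ₗ (S13P2 + S23))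
    (hS2 : S ∘ₗ ν = ν ∘ₗ (S12 + S13P2))
    -- the six operators pairwise commute
    (hcomm : ∀ X ∈ ({R12, R13, R23, S12, S13P2, S23} :
        Set (Module.End ℂ ((A ⊗[ℂ] A) ⊗[ℂ] A))),
      ∀ Y ∈ ({R12, R13, R23, S12, S13P2, S23} :
        Set (Module.End ℂ ((A ⊗[ℂ] A) ⊗[ℂ] A))), Commute X Y)
    (n : ℕ) (a b c : A) :
    ∑ p ∈ Finset.range (n + 1),
        ((p.factorial * (n - p).factorial : ℂ))⁻¹ •
          μ (((R + S) ^ (n - p)) (μ (((R + S) ^ p) (a ⊗ₜ[ℂ] b)) ⊗ₜ[ℂ] c)) =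
    ∑ p ∈ Finset.range (n + 1),
        ((p.factorial * (n - p).factorial : ℂ))⁻¹ •
          μ (((R + S) ^ (n - p)) (a ⊗ₜ[ℂ] μ (((R + S) ^ p) (b ⊗ₜ[ℂ] c)))) := by
  classical
  set T : Module.End ℂ (A ⊗[ℂ] A) := R + S with hT
  set T12 : Module.End ℂ ((A ⊗[ℂ] A) ⊗[ℂ] A) := R12 + S12 with hT12
  set T13 : Module.End ℂ ((A ⊗[ℂ] A) ⊗[ℂ] A) := R13 + S13P2 with hT13
  set T23 : Module.End ℂ ((A ⊗[ℂ] A) ⊗[ℂ] A) := R23 + S23 with hT23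
  set m : (A ⊗[ℂ] A) ⊗[ℂ] A →ₗ[ℂ] A ⊗[ℂ] A := TensorProduct.map μ LinearMap.id with hm
  set x : (A ⊗[ℂ] A) ⊗[ℂ] A := (a ⊗ₜ[ℂ] b) ⊗ₜ[ℂ] c with hx
  -- pairwise commutation of T12, T13, T23
  have hc : ∀ X ∈ ({R12, R13, R23, S12, S13P2, S23} :
      Set (Module.End ℂ ((A ⊗[ℂ] A) ⊗[ℂ] A))), ∀ Y ∈ _, Commute X Y := hcomm
  have mR12 : R12 ∈ ({R12, R13, R23, S12, S13P2, S23} :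
      Set (Module.End ℂ ((A ⊗[ℂ] A) ⊗[ℂ] A))) := by simp
  have mR13 : R13 ∈ ({R12, R13, R23, S12, S13P2, S23} :
      Set (Module.End ℂ ((A ⊗[ℂ] A) ⊗[ℂ] A))) := by simp
  have mR23 : R23 ∈ ({R12, R13, R23, S12, S13P2, S23} :
      Set (Module.End ℂ ((A ⊗[ℂ] A) ⊗[ℂ] A))) := by simp
  have mS12 : S12 ∈ ({R12, R13, R23, S12, S13P2, S23} :
      Set (Module.End ℂ ((A ⊗[ℂ] A) ⊗[ℂ] A))) := by simp
  have mS13 : S13P2 ∈ ({R12, R13, R23, S12, S13P2, S23} :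
      Set (Module.End ℂ ((A ⊗[ℂ] A) ⊗[ℂ] A))) := by simp
  have mS23 : S23 ∈ ({R12, R13, R23, S12, S13P2, S23} :
      Set (Module.End ℂ ((A ⊗[ℂ] A) ⊗[ℂ] A))) := by simp
  have c12_13 : Commute T12 T13 :=
    ((hcomm _ mR12 _ mR13).add_right (hcomm _ mR12 _ mS13)).add_left
      ((hcomm _ mS12 _ mR13).add_right (hcomm _ mS12 _ mS13))
  have c12_23 : Commute T12 T23 :=
    ((hcomm _ mR12 _ mR23).add_right (hcomm _ mR12 _ mS23)).add_left
      ((hcomm _ mS12 _ mR23).add_right (hcomm _ mS12 _ mS23))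
  have c13_23 : Commute T13 T23 :=
    ((hcomm _ mR13 _ mR23).add_right (hcomm _ mR13 _ mS23)).add_left
      ((hcomm _ mS13 _ mR23).add_right (hcomm _ mS13 _ mS23))
  -- base identities
  have hbase12 : TensorProduct.map T LinearMap.id = T12 := by
    apply TensorProduct.ext'
    intro y z
    simp [hT, hT12, hR, hS, hR12, hS12, TensorProduct.sum_tmul, TensorProduct.add_tmul,
      LinearMap.sum_apply]
  have hmap12 : ∀ p : ℕ, TensorProduct.map (T ^ p) LinearMap.id = T12 ^ p := by
    intro p
    induction p with
    | zero => simp [pow_zero, Module.End.one_eq_id, TensorProduct.map_id]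
    | succ p ih =>
      rw [pow_succ, pow_succ, Module.End.mul_eq_comp, Module.End.mul_eq_comp, ← ih, ← hbase12,
        ← TensorProduct.map_comp]
      simp
  -- assoc pulls T23 to the right factor
  have hA : (TensorProduct.assoc ℂ A A A).toLinearMap ∘ₗ T23 =
      TensorProduct.map LinearMap.id T ∘ₗ (TensorProduct.assoc ℂ A A A).toLinearMap := by
    apply TensorProduct.ext_threefold
    intro y z w
    simp [hT, hT23, hR, hS, hR23, hS23, LinearMap.sum_apply, TensorProduct.sum_tmul,
      TensorProduct.tmul_sum, TensorProduct.add_tmul, TensorProduct.tmul_add]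
  have hApow : ∀ p : ℕ, (TensorProduct.assoc ℂ A A A).toLinearMap ∘ₗ (T23 ^ p) =
      TensorProduct.map LinearMap.id (T ^ p) ∘ₗ (TensorProduct.assoc ℂ A A A).toLinearMap := by
    intro p
    induction p with
    | zero => simp [pow_zero, Module.End.one_eq_id, TensorProduct.map_id]
    | succ p ih =>
      rw [pow_succ, pow_succ, Module.End.mul_eq_comp, Module.End.mul_eq_comp, ← LinearMap.comp_assoc,
        ih, LinearMap.comp_assoc, hA, ← LinearMap.comp_assoc, ← TensorProduct.map_comp]
      simp
  -- pull-through iterated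
  have hbase1 : T ∘ₗ m = m ∘ₗ (T13 + T23) := by
    rw [hT, LinearMap.add_comp, hR1, hS1, ← LinearMap.comp_add]
    congr 1
    rw [hT13, hT23]; abel
  have hpull1 : ∀ q : ℕ, (T ^ q) ∘ₗ m = m ∘ₗ (T13 + T23) ^ q := by
    intro q
    induction q with
    | zero => simp [pow_zero, Module.End.one_eq_id]
    | succ q ih =>
      rw [pow_succ', pow_succ', Module.End.mul_eq_comp, Module.End.mul_eq_comp,
        LinearMap.comp_assoc, ih, ← LinearMap.comp_assoc, hbase1, LinearMap.comp_assoc]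
  have hbase2 : T ∘ₗ ν = ν ∘ₗ (T12 + T13) := by
    rw [hT, LinearMap.add_comp, hR2, hS2, ← LinearMap.comp_add]
    congr 1
    rw [hT12, hT13]; abel
  have hpull2 : ∀ q : ℕ, (T ^ q) ∘ₗ ν = ν ∘ₗ (T12 + T13) ^ q := by
    intro q
    induction q with
    | zero => simp [pow_zero, Module.End.one_eq_id]
    | succ q ih =>
      rw [pow_succ', pow_succ', Module.End.mul_eq_comp, Module.End.mul_eq_comp,
        LinearMap.comp_assoc, ih, ← LinearMap.comp_assoc, hbase2, LinearMap.comp_assoc]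
  -- pointwise identifications
  have e1 : ∀ p : ℕ, μ ((T ^ p) (a ⊗ₜ[ℂ] b)) ⊗ₜ[ℂ] c = m ((T12 ^ p) x) := by
    intro p
    rw [← hmap12]
    simp [hm, hx]
  have e2 : ∀ p : ℕ, a ⊗ₜ[ℂ] μ ((T ^ p) (b ⊗ₜ[ℂ] c)) = ν ((T23 ^ p) x) := by
    intro p
    have := congrArg (fun f => (TensorProduct.map (LinearMap.id : A →ₗ[ℂ] A) μ) (f x)) (hApow p)
    simp only [LinearMap.comp_apply] at this
    rw [hν]
    simp only [LinearMap.comp_apply, this]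
    simp [hx, ← TensorProduct.map_comp]
  -- rewrite both sides as a composed map applied to a single operator sum
  have lhs_eq : ∀ p ∈ Finset.range (n + 1),
      ((p.factorial * (n - p).factorial : ℂ))⁻¹ •
          μ ((T ^ (n - p)) (μ ((T ^ p) (a ⊗ₜ[ℂ] b)) ⊗ₜ[ℂ] c)) =
      ((p.factorial * (n - p).factorial : ℂ))⁻¹ •
          (μ ∘ₗ m) ((((T13 + T23) ^ (n - p) * T12 ^ p)) x) := by
    intro p _
    rw [e1 p]
    have := congrArg (fun f => f ((T12 ^ p) x)) (hpull1 (n - p))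
    simp only [LinearMap.comp_apply] at this
    rw [this]
    simp [Module.End.mul_apply]
  have rhs_eq : ∀ p ∈ Finset.range (n + 1),
      ((p.factorial * (n - p).factorial : ℂ))⁻¹ •
          μ ((T ^ (n - p)) (a ⊗ₜ[ℂ] μ ((T ^ p) (b ⊗ₜ[ℂ] c)))) =
      ((p.factorial * (n - p).factorial : ℂ))⁻¹ •
          (μ ∘ₗ ν) ((((T12 + T13) ^ (n - p) * T23 ^ p)) x) := by
    intro p _
    rw [e2 p]
    have := congrArg (fun f => f ((T23 ^ p) x)) (hpull2 (n - p))
    simp only [LinearMap.comp_apply] at this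
    rw [this]
    simp [Module.End.mul_apply]
  rw [Finset.sum_congr rfl lhs_eq, Finset.sum_congr rfl rhs_eq]
  have key1 : ∑ p ∈ Finset.range (n + 1), ((p.factorial * (n - p).factorial : ℂ))⁻¹ •
      ((T13 + T23) ^ (n - p) * T12 ^ p) = ((n.factorial : ℂ))⁻¹ • (T12 + (T13 + T23)) ^ n :=
    fedosov_aux_binom (c12_13.add_right c12_23) n
  have key2 : ∑ p ∈ Finset.range (n + 1), ((p.factorial * (n - p).factorial : ℂ))⁻¹ •
      ((T12 + T13) ^ (n - p) * T23 ^ p) = ((n.factorial : ℂ))⁻¹ • (T23 + (T12 + T13)) ^ n :=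
    fedosov_aux_binom (c12_23.symm.add_right c13_23.symm) n
  have hWeq : T23 + (T12 + T13) = T12 + (T13 + T23) := by abel
  calc ∑ p ∈ Finset.range (n + 1), ((p.factorial * (n - p).factorial : ℂ))⁻¹ •
        (μ ∘ₗ m) ((((T13 + T23) ^ (n - p) * T12 ^ p)) x)
      = (μ ∘ₗ m) ((∑ p ∈ Finset.range (n + 1), ((p.factorial * (n - p).factorial : ℂ))⁻¹ •
          ((T13 + T23) ^ (n - p) * T12 ^ p)) x) := by
        rw [LinearMap.sum_apply, map_sum]
        refine Finset.sum_congr rfl fun p _ => ?_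
        rw [LinearMap.smul_apply, map_smul]
    _ = (μ ∘ₗ m) ((((n.factorial : ℂ))⁻¹ • (T12 + (T13 + T23)) ^ n) x) := by rw [key1]
    _ = (μ ∘ₗ ν) ((((n.factorial : ℂ))⁻¹ • (T12 + (T13 + T23)) ^ n) x) := by rw [hμ]
    _ = (μ ∘ₗ ν) ((∑ p ∈ Finset.range (n + 1), ((p.factorial * (n - p).factorial : ℂ))⁻¹ •
          ((T12 + T13) ^ (n - p) * T23 ^ p)) x) := by rw [key2, hWeq]
    _ = ∑ p ∈ Finset.range (n + 1), ((p.factorial * (n - p).factorial : ℂ))⁻¹ •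
          (μ ∘ₗ ν) ((((T12 + T13) ^ (n - p) * T23 ^ p)) x) := by
        rw [LinearMap.sum_apply, map_sum]
        refine Finset.sum_congr rfl fun p _ => ?_
        rw [LinearMap.smul_apply, map_smul]
end
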